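/- For the A_2^{(1)} Hamiltonian h_0 = f_0 f_1 f_2 + (1/3)(α_1-α_2) f_0 + (1/3)(α_1+2α_2) f_1 - (1/3)(2α_1+α_2) f_2, applying the Bäcklund transformation s_0 yields s_0(h_0) = h_0 + k·(α_0/f_0), where k = α_0+α_1+α_2; moreover s_1(h_0) = h_0 and s_2(h_0) = h_0. -/
import Mathlib


open MvPolynomial

noncomputable section
set_option maxHeartbeats 1600000
set_option synthInstance.maxHeartbeats 1600000

/-- The field `ℂ(α₀,…,α_l; f₀,…,f_l)` of rational functions. -/
abbrev K (l : ℕ) : Type := FractionRing (MvPolynomial (Fin (l+1) ⊕ Fin (l+1)) ℂ)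

/-- The generator `α_i`. -/
def av (l : ℕ) (i : Fin (l+1)) : K l :=
  algebraMap (MvPolynomial (Fin (l+1) ⊕ Fin (l+1)) ℂ) (K l) (X (Sum.inl i))

/-- The generator `f_i`. -/
def fv (l : ℕ) (i : Fin (l+1)) : K l :=
  algebraMap (MvPolynomial (Fin (l+1) ⊕ Fin (l+1)) ℂ) (K l) (X (Sum.inr i))

/-- `s` is the Bäcklund transformation `s_i`. -/
def IsBT (l : ℕ) (i : Fin (l+1)) (s : K l ≃+* K l) : Prop :=
  s (av l i) = - av l i ∧
  s (av l (i+1)) = av l (i+1) + av l i ∧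
  s (av l (i-1)) = av l (i-1) + av l i ∧
  (∀ j : Fin (l+1), j ≠ i → j ≠ i+1 → j ≠ i-1 → s (av l j) = av l j) ∧
  s (fv l i) = fv l i ∧
  s (fv l (i+1)) = fv l (i+1) + av l i / fv l i ∧
  s (fv l (i-1)) = fv l (i-1) - av l i / fv l i ∧
  (∀ j : Fin (l+1), j ≠ i → j ≠ i+1 → j ≠ i-1 → s (fv l j) = fv l j)


/-- The `A₂⁽¹⁾` Hamiltonian
`h₀ = f₀f₁f₂ + (1/3)(α₁-α₂)f₀ + (1/3)(α₁+2α₂)f₁ - (1/3)(2α₁+α₂)f₂`. -/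
def h0 : K 2 :=
  fv 2 0 * fv 2 1 * fv 2 2 + (1/3 : K 2) * (av 2 1 - av 2 2) * fv 2 0
    + (1/3 : K 2) * (av 2 1 + 2 * av 2 2) * fv 2 1
    - (1/3 : K 2) * (2 * av 2 1 + av 2 2) * fv 2 2

lemma fv_ne_zero (l : ℕ) (i : Fin (l+1)) : fv l i ≠ 0 := by
  unfold fv
  rw [map_ne_zero_iff _ (IsFractionRing.injective _ _)]
  exact X_ne_zero _

/-- `s₀(h₀) = h₀ + k·α₀/f₀` with `k = α₀+α₁+α₂`, while `s₁(h₀) = h₀` and `s₂(h₀) = h₀`. -/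
theorem stmt14 (s0 s1 s2 : K 2 ≃+* K 2)
    (h0' : IsBT 2 0 s0) (h1' : IsBT 2 1 s1) (h2' : IsBT 2 2 s2) :
    s0 h0 = h0 + (av 2 0 + av 2 1 + av 2 2) * (av 2 0 / fv 2 0) ∧
    s1 h0 = h0 ∧ s2 h0 = h0 := by
  have hf0 := fv_ne_zero 2 0
  have hf1 := fv_ne_zero 2 1
  have hf2 := fv_ne_zero 2 2
  obtain ⟨a0, a1, a2, -, b0, b1, b2, -⟩ := h0'
  obtain ⟨c1, c2, c0, -, d1, d2, d0, -⟩ := h1'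
  obtain ⟨e2, e0, e1, -, g2, g0, g1, -⟩ := h2'
  simp only [show (0:Fin 3)+1 = 1 by decide, show (0:Fin 3)-1 = 2 by decide,
    show (1:Fin 3)+1 = 2 by decide, show (1:Fin 3)-1 = 0 by decide,
    show (2:Fin 3)+1 = 0 by decide, show (2:Fin 3)-1 = 1 by decide] at a1 a2 b1 b2 c2 c0 d2 d0 e0 e1 g0 g1
  refine ⟨?_, ?_, ?_⟩
  · simp only [h0, map_add, map_sub, map_mul, map_div₀, map_one, map_ofNat,
      a0, a1, a2, b0, b1, b2]
    obtain ⟨q, hq⟩ : ∃ q, av 2 0 = q * fv 2 0 := ⟨_, (div_mul_cancel₀ _ hf0).symm⟩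
    rw [hq, mul_div_cancel_right₀ _ hf0]
    field_simp
    ring
  · simp only [h0, map_add, map_sub, map_mul, map_div₀, map_one, map_ofNat,
      c0, c1, c2, d0, d1, d2]
    obtain ⟨q, hq⟩ : ∃ q, av 2 1 = q * fv 2 1 := ⟨_, (div_mul_cancel₀ _ hf1).symm⟩
    rw [hq, mul_div_cancel_right₀ _ hf1]
    field_simp
    ring
  · simp only [h0, map_add, map_sub, map_mul, map_div₀, map_one, map_ofNat,
      e0, e1, e2, g0, g1, g2]
    obtain ⟨q, hq⟩ : ∃ q, av 2 2 = q * fv 2 2 := ⟨_, (div_mul_cancel₀ _ hf2).symm⟩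
    rw [hq, mul_div_cancel_right₀ _ hf2]
    field_simp
    ring
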